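/- arXiv:2112.05311 — 9 statements merged into one kernel-verified Lean document; each statement's English description precedes it below -/
import Mathlib

section
/- If ∇d V is a discrete gradient for a continuously differentiable function V : ℝⁿ → ℝ, P ∈ ℝⁿˣⁿ is symmetric positive semidefinite, h > 0, and x' = x − h P ∇d V(x', x), then V(x') ≤ V(x). -/
open Matrix

theorem Matrix.PosSemidef.dotProduct_smul_mulVec_nonneg {ι : Type*} [Fintype ι]
    {P : Matrix ι ι ℝ} (hP : P.PosSemidef) {h : ℝ} (hh : 0 ≤ h) (g : ι → ℝ) :
    0 ≤ g ⬝ᵥ (h • (P *ᵥ g)) := by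
  rw [dotProduct_smul, smul_eq_mul]
  exact mul_nonneg hh (by simpa using hP.dotProduct_mulVec_nonneg g)

theorem stmt_1_general (n : ℕ) (V : (Fin n → ℝ) → ℝ)
    (Dg : (Fin n → ℝ) → (Fin n → ℝ) → (Fin n → ℝ))
    (hchain : ∀ x y : Fin n → ℝ, V x - V y = Dg x y ⬝ᵥ (x - y))
    (P : Matrix (Fin n) (Fin n) ℝ) (hP : P.PosSemidef)
    (h : ℝ) (hh : 0 < h)
    (x x' : Fin n → ℝ) (hstep : x' = x - h • (P *ᵥ Dg x' x)) :
    V x' ≤ V x := by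
  set g := Dg x' x
  calc V x' = V x + g ⬝ᵥ (x' - x) := by linarith [hchain x' x]
    _ = V x - g ⬝ᵥ (h • (P *ᵥ g)) := by
      rw [hstep, sub_sub_cancel_left, dotProduct_neg, sub_eq_add_neg]
    _ ≤ V x := sub_le_self _ (hP.dotProduct_smul_mulVec_nonneg hh.le g)

theorem stmt_1 (n : ℕ) (V : (Fin n → ℝ) → ℝ) (hV : ContDiff ℝ 1 V)
    (Dg : (Fin n → ℝ) → (Fin n → ℝ) → (Fin n → ℝ))
    (hDgcont : Continuous fun p : (Fin n → ℝ) × (Fin n → ℝ) => Dg p.1 p.2)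
    (hchain : ∀ x y : Fin n → ℝ, V x - V y = Dg x y ⬝ᵥ (x - y))
    (hconsistent : ∀ x : Fin n → ℝ, ∀ v : Fin n → ℝ, fderiv ℝ V x v = Dg x x ⬝ᵥ v)
    (P : Matrix (Fin n) (Fin n) ℝ) (hP : P.PosSemidef)
    (h : ℝ) (hh : 0 < h)
    (x x' : Fin n → ℝ) (hstep : x' = x - h • (P *ᵥ Dg x' x)) :
    V x' ≤ V x :=
  stmt_1_general n V Dg hchain P hP h hh x x' hstep
end

section
/- For the quadratic function V(x) = (1/2)xᵀAx − xᵀb with A symmetric and positive diagonal entries, the Itoh–Abe discrete gradient scheme x^{k+1} = x^k − h D^{−1} ∇d V(x^{k+1}, x^k) with D = diag(a₁₁,…,aₙₙ) produces exactly the SOR iterates: x_i^{k+1} = (1−ω)x_i^k + (ω/a_ii)(b_i − Σ_{j<i} a_ij x_j^{k+1} − Σ_{j>i} a_ij x_j^k), provided h = 2ω/(2−ω). -/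
open Matrix Finset

theorem stmt_3 (n : ℕ) (A : Matrix (Fin n) (Fin n) ℝ) (hA : A.IsSymm)
    (hdiag : ∀ i, 0 < A i i) (b : Fin n → ℝ)
    (ω : ℝ) (hω : ω ∈ Set.Ioo (0 : ℝ) 2) (h : ℝ) (hh : h = 2 * ω / (2 - ω))
    (xk xk1 : Fin n → ℝ)
    (hIA : ∀ i : Fin n,
      xk1 i = xk i - (h / A i i) *
        ((∑ j ∈ univ.filter (fun j => j < i), A i j * xk1 j) +
          A i i * (xk1 i + xk i) / 2 +
          (∑ j ∈ univ.filter (fun j => i < j), A i j * xk j) - b i)) :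
    ∀ i : Fin n,
      xk1 i = (1 - ω) * xk i + (ω / A i i) *
        (b i - (∑ j ∈ univ.filter (fun j => j < i), A i j * xk1 j) -
          (∑ j ∈ univ.filter (fun j => i < j), A i j * xk j)) := by
  intro i
  have hi := hIA i
  have ha : A i i ≠ 0 := (hdiag i).ne'
  have h2 : (2 : ℝ) - ω ≠ 0 := by have := hω.2; linarith
  subst hh
  set S1 := ∑ j ∈ univ.filter (fun j => j < i), A i j * xk1 j
  set S2 := ∑ j ∈ univ.filter (fun j => i < j), A i j * xk j
  field_simp at hi ⊢
  ring_nf at hi ⊢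
  linarith [hi]
end

section
/- For the SOR update of the i-th component applied to V(x) = (1/2)xᵀAx − xᵀb with A symmetric, updating only coordinate i from x_i^k to x_i^{k+1} = x_i^k − (h/a_ii)(Σ_{j<i} a_ij x_j^{k+1} + a_ii(x_i^{k+1}+x_i^k)/2 + Σ_{j>i} a_ij x_j^k − b_i) decreases V by exactly (a_ii/h)(x_i^{k+1} − x_i^k)²; that is, V evaluated at the partially updated vector (x₁^{k+1},…,x_i^{k+1}, x_{i+1}^k,…,x_n^k) minus V at (x₁^{k+1},…,x_{i−1}^{k+1}, x_i^k,…,x_n^k) equals −(a_ii/h)(x_i^{k+1} − x_i^k)². -/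
open Matrix Finset

theorem stmt_4 (n : ℕ) (A : Matrix (Fin n) (Fin n) ℝ) (hA : A.IsSymm)
    (hdiag : ∀ i, 0 < A i i) (b : Fin n → ℝ) (h : ℝ) (hh : 0 < h)
    (V : (Fin n → ℝ) → ℝ)
    (hV : V = fun x => (1 / 2) * (x ⬝ᵥ (A *ᵥ x)) - x ⬝ᵥ b)
    (xk xk1 : Fin n → ℝ) (i : Fin n)
    (hstep : xk1 i = xk i - (h / A i i) *
      ((∑ j ∈ univ.filter (fun j => j < i), A i j * xk1 j) +
        A i i * (xk1 i + xk i) / 2 +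
        (∑ j ∈ univ.filter (fun j => i < j), A i j * xk j) - b i)) :
    V (fun j => if j ≤ i then xk1 j else xk j) -
      V (fun j => if j < i then xk1 j else xk j)
      = -(A i i / h) * (xk1 i - xk i) ^ 2 := by
  have hAne : A i i ≠ 0 := (hdiag i).ne'
  have hhne : h ≠ 0 := hh.ne'
  set d : ℝ := xk1 i - xk i with hd
  set y : Fin n → ℝ := fun j => if j < i then xk1 j else xk j with hy
  set S : ℝ := (∑ j ∈ univ.filter (fun j => j < i), A i j * xk1 j) +
        A i i * (xk1 i + xk i) / 2 +
        (∑ j ∈ univ.filter (fun j => i < j), A i j * xk j) - b i with hS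
  have hSd : S = -d * (A i i / h) := by
    have h1 : d = -(h / A i i) * S := by rw [hd, hstep]; ring
    field_simp at h1 ⊢
    linarith
  have hz : (fun j => if j ≤ i then xk1 j else xk j) = y + d • (Pi.single i 1 : Fin n → ℝ) := by
    funext j
    rcases lt_trichotomy j i with hj | hj | hj
    · simp [hy, hj, hj.le, hj.ne, Pi.single_eq_of_ne]
    · subst hj
      simp [hy, hd, Pi.single_eq_same]
    · simp [hy, not_lt.2 hj.le, not_le.2 hj, hj.ne', Pi.single_eq_of_ne]
  have hsingle : ∀ v : Fin n → ℝ, Pi.single i (1:ℝ) ⬝ᵥ v = v i := by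
    intro v; simp [dotProduct, Pi.single_apply]
  have hsingle' : ∀ v : Fin n → ℝ, v ⬝ᵥ Pi.single i (1:ℝ) = v i := by
    intro v; simp [dotProduct, Pi.single_apply]
  have hsym : y ⬝ᵥ (A *ᵥ (Pi.single i 1 : Fin n → ℝ)) = (A *ᵥ y) i := by
    rw [dotProduct_mulVec]
    have hv : y ᵥ* A = A *ᵥ y := by
      nth_rewrite 1 [← hA.eq]
      rw [vecMul_transpose]
    rw [hv, hsingle']
  have hAe : (A *ᵥ Pi.single i (1:ℝ)) i = A i i := by
    simp [mulVec, dotProduct, Pi.single_apply]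
  have hAy : (A *ᵥ y) i = (∑ j ∈ univ.filter (fun j => j < i), A i j * xk1 j)
      + A i i * xk i + (∑ j ∈ univ.filter (fun j => i < j), A i j * xk j) := by
    have h0 : (A *ᵥ y) i = ∑ j, A i j * y j := by simp [mulVec, dotProduct]
    rw [h0, ← Finset.sum_filter_add_sum_filter_not univ (fun j => j < i)]
    have h2 : ∑ j ∈ univ.filter (fun j => j < i), A i j * y j
        = ∑ j ∈ univ.filter (fun j => j < i), A i j * xk1 j := by
      refine Finset.sum_congr rfl fun j hj => ?_
      simp only [mem_filter] at hj
      simp [hy, hj.2]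
    have h3 : univ.filter (fun j => ¬ j < i) = insert i (univ.filter (fun j => i < j)) := by
      ext j
      simp only [mem_filter, mem_univ, true_and, mem_insert, not_lt]
      constructor
      · intro hji
        rcases eq_or_lt_of_le hji with h' | h'
        · exact Or.inl h'.symm
        · exact Or.inr h'
      · rintro (rfl | h') 
        · exact le_refl _
        · exact h'.le
    have h4 : ∑ j ∈ univ.filter (fun j => ¬ j < i), A i j * y j
        = A i i * xk i + ∑ j ∈ univ.filter (fun j => i < j), A i j * xk j := by
      rw [h3, Finset.sum_insert (by simp)]
      congr 1
      · simp [hy]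
      · refine Finset.sum_congr rfl fun j hj => ?_
        simp only [mem_filter] at hj
        simp [hy, not_lt.2 hj.2.le]
    rw [h2, h4]; ring
  rw [hV, hz]
  simp only [add_dotProduct, dotProduct_add, smul_dotProduct, dotProduct_smul,
    mulVec_add, mulVec_smul, smul_eq_mul, Pi.smul_apply, Pi.add_apply]
  rw [hsym]
  simp only [hsingle, hAe, hAy]
  rw [hS] at hSd
  linear_combination d * hSd + (d * A i i / 2) * hd
end

section
/- For the projected SOR update of the i-th component, where x_i^{k+1} = max(x̂_i, 0) with x̂_i the unconstrained SOR update, the componentwise dissipation inequality V(…, x_i^{k+1}, …) − V(…, x_i^k, …) ≤ −(a_ii/h)(x_i^{k+1} − x_i^k)² ≤ 0 still holds, because the projected update equals an SOR update with some nonnegative step size not exceeding h. -/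
open Matrix Finset

/-!
Changing only the `i`-th coordinate by `t` changes `V` by `t g + (a_ii / 2) t²`, where `g` is the
`i`-th component of the gradient `A y - b` at the Gauss–Seidel intermediate point `y`. The
unprojected SOR step is `d = -(ω / a_ii) g`; projecting onto `[0, ∞)` from `x_i ≥ 0` replaces it by
`t = θ d` with `θ ∈ [0, 1]`, which is encoded as `t² ≤ t d`. That inequality is all the energy
estimate of a plain SOR step needs.
-/

theorem Finset.sum_univ_eq_sum_lt_add_add_sum_gt {ι M : Type*} [Fintype ι] [LinearOrder ι]
    [AddCommMonoid M] (f : ι → M) (i : ι) :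
    ∑ j, f j = ∑ j ∈ univ.filter (· < i), f j + f i + ∑ j ∈ univ.filter (i < ·), f j := by
  have hge : univ.filter (fun j => ¬ j < i) = insert i (univ.filter (i < ·)) := by
    ext j
    simp only [mem_filter, mem_univ, true_and, mem_insert, not_lt]
    exact le_iff_eq_or_lt.trans (or_congr eq_comm Iff.rfl)
  rw [← sum_filter_add_sum_filter_not univ (· < i), hge, sum_insert (by simp), add_assoc]

theorem Matrix.mulVec_ite_lt_apply {ι R : Type*} [Fintype ι] [LinearOrder ι]
    [NonUnitalNonAssocSemiring R] (A : Matrix ι ι R) (u v : ι → R) (i : ι) :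
    (A *ᵥ fun j => if j < i then u j else v j) i =
      ∑ j ∈ univ.filter (· < i), A i j * u j + A i i * v i +
        ∑ j ∈ univ.filter (i < ·), A i j * v j := by
  rw [mulVec, dotProduct, sum_univ_eq_sum_lt_add_add_sum_gt _ i, if_neg (lt_irrefl i)]
  congr 1
  · congr 1
    exact sum_congr rfl fun j hj => by rw [if_pos (mem_filter.1 hj).2]
  · exact sum_congr rfl fun j hj => by rw [if_neg (not_lt.2 (mem_filter.1 hj).2.le)]

theorem ite_le_eq_ite_lt_add_single {ι R : Type*} [LinearOrder ι] [AddCommGroup R]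
    (u v : ι → R) (i : ι) :
    (fun j => if j ≤ i then u j else v j) =
      (fun j => if j < i then u j else v j) + Pi.single i (u i - v i) := by
  funext j
  rcases lt_trichotomy j i with hj | rfl | hj
  · simp [hj, hj.le, hj.ne]
  · simp
  · simp [not_le.2 hj, not_lt.2 hj.le, hj.ne']

noncomputable def quadraticEnergy {ι : Type*} [Fintype ι] (A : Matrix ι ι ℝ) (b x : ι → ℝ) : ℝ :=
  (1 / 2) * (x ⬝ᵥ (A *ᵥ x)) - x ⬝ᵥ b

theorem Matrix.IsSymm.quadraticEnergy_add_single_sub {ι : Type*} [Fintype ι] [DecidableEq ι]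
    {A : Matrix ι ι ℝ} (hA : A.IsSymm) (b y : ι → ℝ) (i : ι) (t : ℝ) :
    quadraticEnergy A b (y + Pi.single i t) - quadraticEnergy A b y =
      t * ((A *ᵥ y) i - b i) + A i i / 2 * t ^ 2 := by
  have hcross : y ⬝ᵥ (A *ᵥ Pi.single i t) = Pi.single i t ⬝ᵥ (A *ᵥ y) := by
    rw [dotProduct_mulVec, ← mulVec_transpose, hA.eq, dotProduct_comm]
  simp only [quadraticEnergy, mulVec_add, dotProduct_add, add_dotProduct, hcross]
  simp only [single_dotProduct, mulVec_single, Pi.smul_apply, col_apply,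
    MulOpposite.smul_eq_mul_unop, MulOpposite.unop_op]
  ring

theorem sq_sub_le_mul_of_eq_max_add {x y d : ℝ} (hx : 0 ≤ x) (hy : y = max (x + d) 0) :
    (y - x) ^ 2 ≤ (y - x) * d := by
  rcases le_total 0 (x + d) with hd | hd
  · rw [hy, max_eq_left hd, add_sub_cancel_left, sq]
  · rw [hy, max_eq_right hd]
    nlinarith

theorem sor_step_dissipation {a ω t g : ℝ} (ha : 0 < a) (hω : ω ∈ Set.Ioo (0 : ℝ) 2)
    (ht : t ^ 2 ≤ t * (-(ω / a) * g)) :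
    t * g + a / 2 * t ^ 2 ≤ -(a / (2 * ω / (2 - ω))) * t ^ 2 := by
  obtain ⟨hω0, hω2⟩ := hω
  have hg : a * t ^ 2 ≤ -(ω * (t * g)) := by
    have := mul_le_mul_of_nonneg_left ht ha.le
    field_simp at this
    linarith
  rw [div_div_eq_mul_div, ← sub_nonneg]
  have key : -(a * (2 - ω) / (2 * ω)) * t ^ 2 - (t * g + a / 2 * t ^ 2) =
      (-(ω * (t * g)) - a * t ^ 2) / ω := by
    field_simp
    ring
  rw [key]
  exact div_nonneg (by linarith) hω0.le

theorem stmt_5 (n : ℕ) (A : Matrix (Fin n) (Fin n) ℝ) (hA : A.IsSymm)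
    (hdiag : ∀ i, 0 < A i i) (b : Fin n → ℝ)
    (ω : ℝ) (hω : ω ∈ Set.Ioo (0 : ℝ) 2) (h : ℝ) (hh : h = 2 * ω / (2 - ω))
    (V : (Fin n → ℝ) → ℝ)
    (hV : V = fun x => (1 / 2) * (x ⬝ᵥ (A *ᵥ x)) - x ⬝ᵥ b)
    (xk xk1 : Fin n → ℝ) (hxk : ∀ j, 0 ≤ xk j) (i : Fin n)
    (hproj : xk1 i =
      max ((1 - ω) * xk i + (ω / A i i) *
        (b i - (∑ j ∈ univ.filter (fun j => j < i), A i j * xk1 j) -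
          (∑ j ∈ univ.filter (fun j => i < j), A i j * xk j))) 0) :
    V (fun j => if j ≤ i then xk1 j else xk j) -
        V (fun j => if j < i then xk1 j else xk j)
      ≤ -(A i i / h) * (xk1 i - xk i) ^ 2 ∧
    -(A i i / h) * (xk1 i - xk i) ^ 2 ≤ 0 := by
  have hV' : V = quadraticEnergy A b := hV
  set y := fun j => if j < i then xk1 j else xk j
  set g := (A *ᵥ y) i - b i
  have hstep : V (fun j => if j ≤ i then xk1 j else xk j) - V y =
      (xk1 i - xk i) * g + A i i / 2 * (xk1 i - xk i) ^ 2 := by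
    rw [hV', ite_le_eq_ite_lt_add_single, hA.quadraticEnergy_add_single_sub]
  have hrow : (∑ j ∈ univ.filter (fun j => j < i), A i j * xk1 j) +
      (∑ j ∈ univ.filter (fun j => i < j), A i j * xk j) = (A *ᵥ y) i - A i i * xk i := by
    rw [mulVec_ite_lt_apply]
    ring
  have hsor : (1 - ω) * xk i + (ω / A i i) * (b i - ((A *ᵥ y) i - A i i * xk i)) =
      xk i + -(ω / A i i) * g := by
    field_simp [(hdiag i).ne']
    ring
  rw [sub_sub, hrow, hsor] at hproj
  have hh0 : 0 < h := by
    obtain ⟨hω0, hω2⟩ := hω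
    rw [hh]
    exact div_pos (by linarith) (by linarith)
  refine ⟨?_, ?_⟩
  · rw [hstep, hh]
    exact sor_step_dissipation (hdiag i) hω (sq_sub_le_mul_of_eq_max_add (hxk i) hproj)
  · exact mul_nonpos_of_nonpos_of_nonneg (neg_nonpos.2 (div_pos (hdiag i) hh0).le) (sq_nonneg _)
end

section
/- If 0 < ω < 2 (equivalently h = 2ω/(2−ω) > 0), then one full sweep of the projected SOR method applied to the nonnegative quadratic program satisfies V(x^{k+1}) − V(x^k) ≤ −γ ‖x^{k+1} − x^k‖², where γ = (1/h)·min(a₁₁,…,aₙₙ) > 0. -/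
open Matrix Finset

/-- Projection onto `[0, ∞)` inequality. -/
lemma proj_ineq_aux (a y : ℝ) (hy : 0 ≤ y) : (max a 0 - a) * (max a 0 - y) ≤ 0 := by
  rcases le_or_gt 0 a with hc | hc
  · simp [max_eq_left hc]
  · rw [max_eq_right hc.le]
    nlinarith

/-- Change of the quadratic form under a single-coordinate update, for symmetric `A`. -/
lemma quad_update_aux (n : ℕ) (A : Matrix (Fin n) (Fin n) ℝ)
    (hsym : ∀ i j, A i j = A j i) (x : Fin n → ℝ) (i : Fin n) (c : ℝ) :
    (Function.update x i c) ⬝ᵥ (A *ᵥ Function.update x i c)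
      = x ⬝ᵥ (A *ᵥ x) + 2 * (c - x i) * ((A *ᵥ x) i) + A i i * (c - x i) ^ 2 := by
  have hupd : Function.update x i c = x + Pi.single i (c - x i) := by
    funext j
    by_cases hj : j = i
    · subst hj; simp
    · simp [Function.update_of_ne hj, Pi.single_eq_of_ne hj]
  rw [hupd]
  set d := c - x i with hd
  have h1 : A *ᵥ (x + Pi.single i d) = A *ᵥ x + A *ᵥ Pi.single i d := by
    rw [Matrix.mulVec_add]
  rw [h1, add_dotProduct, dotProduct_add, dotProduct_add]
  have h2 : A *ᵥ Pi.single i d = fun k => A k i * d := Matrix.mulVec_single A i d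
  have h3 : x ⬝ᵥ (A *ᵥ Pi.single i d) = d * (A *ᵥ x) i := by
    rw [h2]
    simp only [dotProduct, Matrix.mulVec]
    rw [Finset.mul_sum]
    apply Finset.sum_congr rfl
    intro k _
    rw [hsym i k]
    ring
  have h4 : (Pi.single i d) ⬝ᵥ (A *ᵥ x) = d * (A *ᵥ x) i :=
    single_dotProduct _ _ _
  have h5 : (Pi.single i d) ⬝ᵥ (A *ᵥ Pi.single i d) = A i i * d ^ 2 := by
    rw [h2, single_dotProduct]
    ring
  rw [h3, h4, h5]
  ring

set_option maxHeartbeats 1000000 in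
theorem stmt_6 (n : ℕ) [NeZero n] (A : Matrix (Fin n) (Fin n) ℝ)
    (hA : A.PosSemidef) (hdiag : ∀ i, 0 < A i i) (b : Fin n → ℝ)
    (ω : ℝ) (hω : ω ∈ Set.Ioo (0 : ℝ) 2) (h : ℝ) (hh : h = 2 * ω / (2 - ω))
    (V : (Fin n → ℝ) → ℝ)
    (hV : V = fun x => (1 / 2) * (x ⬝ᵥ (A *ᵥ x)) - x ⬝ᵥ b)
    (γ : ℝ) (hγ : γ = (1 / h) * (univ.inf' univ_nonempty fun i => A i i))
    (xk xk1 : Fin n → ℝ) (hxk : ∀ j, 0 ≤ xk j)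
    (hsweep : ∀ i : Fin n,
      xk1 i = max ((1 - ω) * xk i + (ω / A i i) *
        (b i - (∑ j ∈ univ.filter (fun j => j < i), A i j * xk1 j) -
          (∑ j ∈ univ.filter (fun j => i < j), A i j * xk j))) 0) :
    V xk1 - V xk ≤ -γ * ∑ i, (xk1 i - xk i) ^ 2 := by
  obtain ⟨hω0, hω2⟩ := hω
  have hωne : ω ≠ 0 := ne_of_gt hω0
  have h2ω : (0:ℝ) < 2 - ω := by linarith
  have hhpos : 0 < h := by rw [hh]; positivity
  have hhinv : 1 / h = 1 / ω - 1 / 2 := by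
    have hne2 : (2 - ω) ≠ 0 := ne_of_gt h2ω
    have hne : h ≠ 0 := ne_of_gt hhpos
    rw [hh, one_div_div]
    field_simp
  have hsym : ∀ i j, A i j = A j i := by
    intro i j
    have := hA.isHermitian.apply j i
    simpa using this
  -- intermediate vectors of the sweep
  set y : ℕ → Fin n → ℝ := fun m j => if (j : ℕ) < m then xk1 j else xk j with hy
  have hy0 : y 0 = xk := by funext j; simp [hy]
  have hyn : y n = xk1 := by funext j; simp [hy, j.isLt]
  -- per-step estimate
  have hstep : ∀ i : Fin n, V (y (i + 1)) - V (y i) ≤ -γ * (xk1 i - xk i) ^ 2 := by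
    intro i
    have hyiup : y (i + 1) = Function.update (y i) i (xk1 i) := by
      funext j
      by_cases hj : j = i
      · subst hj; simp [hy]
      · have hne : (j : ℕ) ≠ (i : ℕ) := fun hc => hj (Fin.ext hc)
        have : ((j : ℕ) < (i : ℕ) + 1) ↔ ((j : ℕ) < (i : ℕ)) := by omega
        simp [hy, Function.update_of_ne hj, this]
    have hyii : y i i = xk i := by simp [hy]
    set d := xk1 i - xk i with hd
    set r := (A *ᵥ y i) i - b i with hr
    -- identify the residual with the sweep formula
    have hres : (A *ᵥ y i) i
        = (∑ j ∈ univ.filter (fun j => j < i), A i j * xk1 j) + (A i i * xk i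
          + (∑ j ∈ univ.filter (fun j => i < j), A i j * xk j)) := by
      have h0 : (A *ᵥ y i) i = ∑ j, A i j * y i j := by
        simp [Matrix.mulVec, dotProduct]
      rw [h0, ← Finset.sum_filter_add_sum_filter_not univ (fun j => j < i)
        (fun j => A i j * y i j)]
      congr 1
      · apply Finset.sum_congr rfl
        intro j hj
        have hji : j < i := (Finset.mem_filter.mp hj).2
        have hji' : (j : ℕ) < (i : ℕ) := hji
        simp [hy, hji']
      · have hins : (univ.filter (fun j : Fin n => ¬ j < i))
            = insert i (univ.filter (fun j => i < j)) := by
          ext j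
          simp only [Finset.mem_filter, Finset.mem_univ, true_and, Finset.mem_insert]
          constructor
          · intro hj
            rcases lt_or_eq_of_le (not_lt.mp hj) with h1 | h1
            · exact Or.inr h1
            · exact Or.inl h1.symm
          · rintro (rfl | hj)
            · exact lt_irrefl _
            · exact fun hc => absurd (hc.trans hj) (lt_irrefl _)
        rw [hins, Finset.sum_insert (by simp), hyii]
        congr 1
        apply Finset.sum_congr rfl
        intro j hj
        have hij : i < j := (Finset.mem_filter.mp hj).2
        have hij' : ¬ (j : ℕ) < (i : ℕ) := not_lt.mpr (le_of_lt hij)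
        simp [hy, hij']
    -- the sweep update as projection
    have hz : xk1 i = max (xk i - (ω / A i i) * r) 0 := by
      rw [hsweep i]
      congr 1
      rw [hr, hres]
      have hAii : A i i ≠ 0 := ne_of_gt (hdiag i)
      field_simp
      ring
    -- projection inequality
    have hproj : (xk1 i - (xk i - (ω / A i i) * r)) * (xk1 i - xk i) ≤ 0 := by
      rw [hz]
      exact proj_ineq_aux _ _ (hxk i)
    have hkey : d ^ 2 + (ω / A i i) * r * d ≤ 0 := by
      have : xk1 i - (xk i - (ω / A i i) * r) = d + (ω / A i i) * r := by
        rw [hd]; ring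
      rw [this, hd] at hproj
      nlinarith [hproj]
    have hAii : (0:ℝ) < A i i := hdiag i
    have hrd : r * d ≤ -(A i i / ω) * d ^ 2 := by
      have hmul : (A i i / ω) * (d ^ 2 + (ω / A i i) * r * d) ≤ 0 := by
        apply mul_nonpos_of_nonneg_of_nonpos _ hkey
        positivity
      have hexp : (A i i / ω) * (d ^ 2 + (ω / A i i) * r * d)
          = (A i i / ω) * d ^ 2 + r * d := by
        have hane : A i i ≠ 0 := ne_of_gt hAii
        field_simp
      rw [hexp] at hmul
      linarith
    -- V difference for this step
    have hVdiff : V (y (i + 1)) - V (y i)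
        = (1 / 2) * A i i * d ^ 2 + d * r := by
      rw [hyiup]
      simp only [hV]
      rw [quad_update_aux n A hsym (y i) i (xk1 i), hyii]
      have hb : (Function.update (y i) i (xk1 i)) ⬝ᵥ b - (y i) ⬝ᵥ b = d * b i := by
        simp only [dotProduct]
        rw [← Finset.sum_sub_distrib]
        rw [Finset.sum_eq_single i]
        · simp [hyii, hd]; ring
        · intro j _ hj
          rw [Function.update_of_ne hj]; ring
        · intro hc; exact absurd (Finset.mem_univ i) hc
      have : (Function.update (y i) i (xk1 i)) ⬝ᵥ b
          = (y i) ⬝ᵥ b + d * b i := by linarith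
      rw [this, hr, hd]
      ring
    rw [hVdiff]
    -- combine
    have hγle : γ ≤ A i i / h := by
      rw [hγ]
      have hmin : (univ.inf' univ_nonempty fun i => A i i) ≤ A i i :=
        Finset.inf'_le _ (Finset.mem_univ i)
      have : (1 / h) * (univ.inf' univ_nonempty fun i => A i i) ≤ (1 / h) * A i i := by
        apply mul_le_mul_of_nonneg_left hmin (by positivity)
      calc (1 / h) * (univ.inf' univ_nonempty fun i => A i i)
          ≤ (1 / h) * A i i := this
        _ = A i i / h := by ring
    have hAh : A i i / h = (1 / ω - 1 / 2) * A i i := by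
      rw [div_eq_mul_inv, ← one_div, hhinv]; ring
    have hbound : (1 / 2) * A i i * d ^ 2 + d * r ≤ -(A i i / h) * d ^ 2 := by
      have h6 : d * r ≤ -(A i i / ω) * d ^ 2 := by
        rw [mul_comm]; exact hrd
      rw [hAh]
      have he : -((1 / ω - 1 / 2) * A i i) * d ^ 2
          = (1 / 2) * A i i * d ^ 2 - (A i i / ω) * d ^ 2 := by ring
      rw [he]
      linarith
    calc (1 / 2) * A i i * d ^ 2 + d * r
        ≤ -(A i i / h) * d ^ 2 := hbound
      _ ≤ -γ * d ^ 2 := by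
          have := mul_le_mul_of_nonneg_right hγle (sq_nonneg d)
          linarith
  -- telescoping
  have htel : V xk1 - V xk = ∑ m ∈ Finset.range n, (V (y (m + 1)) - V (y m)) := by
    rw [Finset.sum_range_sub (fun m => V (y m)), hy0, hyn]
  rw [htel]
  set f : ℕ → ℝ := fun m => if hm : m < n then (xk1 ⟨m, hm⟩ - xk ⟨m, hm⟩) ^ 2 else 0 with hf
  have hsum : ∑ m ∈ Finset.range n, (V (y (m + 1)) - V (y m))
      ≤ ∑ m ∈ Finset.range n, (-γ * f m) := by
    apply Finset.sum_le_sum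
    intro m hm
    have hmn : m < n := Finset.mem_range.mp hm
    have := hstep ⟨m, hmn⟩
    simpa [hf, hmn] using this
  refine hsum.trans (le_of_eq ?_)
  rw [← Finset.mul_sum]
  congr 1
  rw [← Fin.sum_univ_eq_sum_range f n]
  apply Finset.sum_congr rfl
  intro i _
  simp [hf, i.isLt]
end

section
/- If the step sizes h^k of the adaptive projected SOR method satisfy 0 < h^k ≤ M_h < ∞ for all k, then each sweep satisfies V(x^{k+1}) − V(x^k) ≤ −γ̃‖x^{k+1} − x^k‖² with γ̃ = (1/M_h)·min(a₁₁,…,aₙₙ). -/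
/-!
A sweep changes one coordinate at a time, so `V (x (k+1)) - V (x k)` telescopes over the
intermediate Gauss–Seidel points. Along coordinate `i`, `V` is a one-dimensional quadratic with
curvature `A i i`, and the PSOR update is a relaxed Newton step projected onto `[0, ∞)`. The
variational inequality of that projection (the current value is itself nonnegative) shows that the
step of length `d` lowers `V` by at least `(A i i / ω - A i i / 2) d²`, which equals
`(A i i / h) d² ≥ γ d²` for `ω = 2h / (2 + h)`.
-/

open Matrix Finset

theorem Function.update_eq_add_single {ι R : Type*} [DecidableEq ι] [AddCommGroup R]
    (z : ι → R) (i : ι) (t : R) : Function.update z i t = z + Pi.single i (t - z i) := by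
  rw [Pi.update_eq_sub_add_single, Pi.single_sub]
  abel

theorem Matrix.IsSymm.dotProduct_mulVec_update {ι R : Type*} [Fintype ι] [DecidableEq ι]
    [CommRing R] {A : Matrix ι ι R} (hA : A.IsSymm) (z : ι → R) (i : ι) (t : R) :
    Function.update z i t ⬝ᵥ (A *ᵥ Function.update z i t)
      = z ⬝ᵥ (A *ᵥ z) + 2 * (t - z i) * (A *ᵥ z) i + A i i * (t - z i) ^ 2 := by
  have hcross : z ⬝ᵥ (A *ᵥ Pi.single i (t - z i)) = (A *ᵥ z) i * (t - z i) := by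
    rw [dotProduct_mulVec, dotProduct_single, ← mulVec_transpose, hA.eq]
  rw [Function.update_eq_add_single, mulVec_add, dotProduct_add, add_dotProduct, add_dotProduct,
    hcross, single_dotProduct, single_dotProduct, mulVec_single]
  simp only [Pi.smul_apply, col_apply, MulOpposite.smul_eq_mul_unop, MulOpposite.unop_op]
  ring

theorem mul_sub_max_zero_nonneg {R : Type*} [Ring R] [LinearOrder R] [IsStrictOrderedRing R]
    {c : R} (hc : 0 ≤ c) (p : R) : 0 ≤ (max p 0 - c) * (p - max p 0) := by
  rcases le_total 0 p with hp | hp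
  · simp [max_eq_left hp]
  · rw [max_eq_right hp, zero_sub, sub_zero, neg_mul, ← mul_neg]
    exact mul_nonneg hc (neg_nonneg.2 hp)

theorem projected_relaxation_step_le {a ω c g t : ℝ} (ha : 0 < a) (hω : 0 < ω) (hc : 0 ≤ c)
    (ht : t = max (c - ω / a * g) 0) :
    (t - c) * g + a / 2 * (t - c) ^ 2 ≤ -(a / ω - a / 2) * (t - c) ^ 2 := by
  have hproj := mul_sub_max_zero_nonneg hc (c - ω / a * g)
  rw [← ht] at hproj
  have hslope : a * (t - c) ^ 2 ≤ -(ω * ((t - c) * g)) := by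
    have : a * ((t - c) * (c - ω / a * g - t)) = -(ω * ((t - c) * g)) - a * (t - c) ^ 2 := by
      field_simp
      ring
    nlinarith [mul_nonneg ha.le hproj]
  have : -(a / ω - a / 2) * (t - c) ^ 2 - ((t - c) * g + a / 2 * (t - c) ^ 2)
      = (-(ω * ((t - c) * g)) - a * (t - c) ^ 2) / ω := by
    field_simp
    ring
  linarith [div_nonneg (sub_nonneg.2 hslope) hω.le]

theorem div_relaxation_sub_half (a : ℝ) {h : ℝ} (hh : 0 < h) :
    a / (2 * h / (2 + h)) - a / 2 = a / h := by
  field_simp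
  ring

def sweepPoint {n : ℕ} {α : Type*} (u w : Fin n → α) (m : ℕ) : Fin n → α :=
  fun j => if (j : ℕ) < m then w j else u j

section sweepPoint

variable {n : ℕ} {α : Type*} (u w : Fin n → α)

@[simp] theorem sweepPoint_zero : sweepPoint u w 0 = u := by
  funext j
  simp [sweepPoint]

@[simp] theorem sweepPoint_self : sweepPoint u w n = w := by
  funext j
  simp [sweepPoint]

@[simp] theorem sweepPoint_apply_self (i : Fin n) : sweepPoint u w i i = u i := by
  simp [sweepPoint]

theorem sweepPoint_succ (i : Fin n) :
    sweepPoint u w (i + 1) = Function.update (sweepPoint u w i) i (w i) := by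
  funext j
  rcases lt_trichotomy j i with hji | rfl | hij
  · have : (j : ℕ) < i := hji
    simp [sweepPoint, Function.update_of_ne hji.ne, this, Nat.lt_succ_of_lt this]
  · simp [sweepPoint]
  · have : (i : ℕ) < j := hij
    have : ¬ (j : ℕ) < i + 1 := by omega
    have : ¬ (j : ℕ) < i := by omega
    simp [sweepPoint, Function.update_of_ne hij.ne', *]

theorem sub_eq_sum_sweepPoint {G : Type*} [AddCommGroup G] (f : (Fin n → α) → G) :
    f w - f u = ∑ i : Fin n,
      (f (Function.update (sweepPoint u w i) i (w i)) - f (sweepPoint u w i)) := by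
  simp_rw [← sweepPoint_succ]
  rw [Fin.sum_univ_eq_sum_range (fun m => f (sweepPoint u w (m + 1)) - f (sweepPoint u w m)),
    Finset.sum_range_sub (fun m => f (sweepPoint u w m)), sweepPoint_self, sweepPoint_zero]

end sweepPoint

theorem mulVec_sweepPoint_apply {n : ℕ} {R : Type*} [NonUnitalNonAssocSemiring R]
    (A : Matrix (Fin n) (Fin n) R) (u w : Fin n → R) (i : Fin n) :
    (A *ᵥ sweepPoint u w i) i
      = ∑ j ∈ Iio i, A i j * w j + A i i * u i + ∑ j ∈ Ioi i, A i j * u j := by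
  have hlt : ∀ j ∈ Iio i, A i j * sweepPoint u w i j = A i j * w j := fun j hj => by
    simp [sweepPoint, mem_Iio.1 hj]
  have hgt : ∀ j ∈ Ioi i, A i j * sweepPoint u w i j = A i j * u j := fun j hj => by
    simp [sweepPoint, not_lt.2 (mem_Ioi.1 hj).le]
  rw [mulVec, dotProduct, ← Finset.sum_filter_add_sum_filter_not univ (· < i)]
  simp only [not_lt, filter_gt_eq_Iio, filter_le_eq_Ici, ← Ioi_insert, sum_insert notMem_Ioi_self,
    sum_congr rfl hlt, sum_congr rfl hgt, ← add_assoc]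
  simp [sweepPoint]

noncomputable def quadEnergy {ι : Type*} [Fintype ι] (A : Matrix ι ι ℝ) (b z : ι → ℝ) : ℝ :=
  1 / 2 * (z ⬝ᵥ (A *ᵥ z)) - z ⬝ᵥ b

theorem quadEnergy_update_sub {ι : Type*} [Fintype ι] [DecidableEq ι]
    {A : Matrix ι ι ℝ} (hA : A.IsSymm) (b z : ι → ℝ) (i : ι) (t : ℝ) :
    quadEnergy A b (Function.update z i t) - quadEnergy A b z
      = (t - z i) * ((A *ᵥ z) i - b i) + A i i / 2 * (t - z i) ^ 2 := by
  rw [quadEnergy, quadEnergy, hA.dotProduct_mulVec_update, Function.update_eq_add_single,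
    add_dotProduct, single_dotProduct]
  ring

theorem quadEnergy_psor_update_sub_le {n : ℕ} {A : Matrix (Fin n) (Fin n) ℝ} (hA : A.IsSymm)
    (b u w : Fin n → ℝ) {ω : ℝ} (i : Fin n) (ha : 0 < A i i) (hω : 0 < ω) (hu : 0 ≤ u i)
    (hw : w i = max ((1 - ω) * u i + (ω / A i i) *
      (b i - ∑ j ∈ Iio i, A i j * w j - ∑ j ∈ Ioi i, A i j * u j)) 0) :
    quadEnergy A b (Function.update (sweepPoint u w i) i (w i)) - quadEnergy A b (sweepPoint u w i)
      ≤ -(A i i / ω - A i i / 2) * (w i - u i) ^ 2 := by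
  rw [quadEnergy_update_sub hA, mulVec_sweepPoint_apply, sweepPoint_apply_self]
  refine projected_relaxation_step_le ha hω hu (hw.trans ?_)
  congr 1
  field_simp
  ring

theorem stmt_7 (n : ℕ) [NeZero n] (A : Matrix (Fin n) (Fin n) ℝ)
    (hA : A.PosSemidef) (hdiag : ∀ i, 0 < A i i) (b : Fin n → ℝ)
    (V : (Fin n → ℝ) → ℝ)
    (hV : V = fun x => (1 / 2) * (x ⬝ᵥ (A *ᵥ x)) - x ⬝ᵥ b)
    (Mh : ℝ) (hk : ℕ → ℝ) (hhk : ∀ k, 0 < hk k ∧ hk k ≤ Mh)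
    (ωk : ℕ → ℝ) (hωk : ∀ k, ωk k = 2 * hk k / (2 + hk k))
    (γ : ℝ) (hγ : γ = (1 / Mh) * (univ.inf' univ_nonempty fun i => A i i))
    (x : ℕ → Fin n → ℝ) (hx0 : ∀ j, 0 ≤ x 0 j)
    (hsweep : ∀ k, ∀ i : Fin n,
      x (k + 1) i = max ((1 - ωk k) * x k i + (ωk k / A i i) *
        (b i - (∑ j ∈ univ.filter (fun j => j < i), A i j * x (k + 1) j) -
          (∑ j ∈ univ.filter (fun j => i < j), A i j * x k j))) 0) :
    ∀ k, V (x (k + 1)) - V (x k) ≤ -γ * ∑ i, (x (k + 1) i - x k i) ^ 2 := by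
  obtain rfl : V = quadEnergy A b := hV
  have hsym : A.IsSymm := isHermitian_iff_isSymm.1 hA.isHermitian
  have hnonneg : ∀ m j, 0 ≤ x m j
    | 0, j => hx0 j
    | m + 1, j => hsweep m j ▸ le_max_right _ _
  have hγ_le : ∀ k i, γ ≤ A i i / hk k := fun k i => by
    have hMh : 0 < Mh := (hhk k).1.trans_le (hhk k).2
    calc γ ≤ A i i / Mh := by
          rw [hγ, one_div_mul_eq_div]
          exact div_le_div_of_nonneg_right (inf'_le _ (mem_univ i)) hMh.le
      _ ≤ A i i / hk k := div_le_div_of_nonneg_left (hdiag i).le (hhk k).1 (hhk k).2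
  intro k
  have hω : 0 < ωk k := by
    have := (hhk k).1
    rw [hωk]
    positivity
  rw [sub_eq_sum_sweepPoint (x k) (x (k + 1)), mul_sum]
  refine sum_le_sum fun i _ => ?_
  calc _ ≤ -(A i i / ωk k - A i i / 2) * (x (k + 1) i - x k i) ^ 2 :=
        quadEnergy_psor_update_sub_le hsym b _ _ i (hdiag i) hω (hnonneg k i)
          (by simpa only [filter_gt_eq_Iio, filter_lt_eq_Ioi] using hsweep k i)
    _ = -(A i i / hk k) * (x (k + 1) i - x k i) ^ 2 := by
        rw [hωk, div_relaxation_sub_half _ (hhk k).1]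
    _ ≤ -γ * (x (k + 1) i - x k i) ^ 2 := by
        gcongr
        exact hγ_le k i
end

section
/- For ω ∈ (0,2), if x* is a stationary point of the projected SOR sweep (i.e., applying one sweep to x* returns x*), then x* satisfies the KKT conditions x* ≥ 0, Ax* − b ≥ 0, (x*)ᵀ(Ax* − b) = 0 of the nonnegative quadratic program. -/
open Matrix Finset

theorem stmt_11 (n : ℕ) (A : Matrix (Fin n) (Fin n) ℝ) (hA : A.IsSymm)
    (hdiag : ∀ i, 0 < A i i) (b : Fin n → ℝ)
    (ω : ℝ) (hω : ω ∈ Set.Ioo (0 : ℝ) 2) (x : Fin n → ℝ)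
    (hfix : ∀ i : Fin n,
      x i = max ((1 - ω) * x i + (ω / A i i) *
        (b i - (∑ j ∈ univ.filter (fun j => j < i), A i j * x j) -
          (∑ j ∈ univ.filter (fun j => i < j), A i j * x j))) 0) :
    (∀ i, 0 ≤ x i) ∧ (∀ i, 0 ≤ (A *ᵥ x - b) i) ∧ x ⬝ᵥ (A *ᵥ x - b) = 0 := by
  obtain ⟨hω0, hω2⟩ := hω
  have key : ∀ i : Fin n, 0 ≤ x i ∧ 0 ≤ (A *ᵥ x - b) i ∧ x i * (A *ᵥ x - b) i = 0 := by
    intro i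
    have hd := hdiag i
    set s₁ := ∑ j ∈ univ.filter (fun j => j < i), A i j * x j with hs₁
    set s₂ := ∑ j ∈ univ.filter (fun j => i < j), A i j * x j with hs₂
    have hmv : (A *ᵥ x) i = s₁ + A i i * x i + s₂ := by
      have h1 : (univ.filter (fun j : Fin n => ¬ j < i))
          = insert i (univ.filter (fun j => i < j)) := by
        ext j
        simp only [Finset.mem_filter, Finset.mem_univ, true_and, Finset.mem_insert,
          Fin.lt_def, Fin.ext_iff]
        omega
      have h2 : i ∉ univ.filter (fun j : Fin n => i < j) := by simp
      show (∑ j, A i j * x j) = _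
      rw [← Finset.sum_filter_add_sum_filter_not univ (fun j => j < i)
        (fun j => A i j * x j), h1, Finset.sum_insert h2, hs₁, hs₂]
      ring
    have hsub : (A *ᵥ x - b) i = s₁ + A i i * x i + s₂ - b i := by
      simp [hmv]
    have hfi := hfix i
    rw [← hs₁, ← hs₂] at hfi
    have hx0 : 0 ≤ x i := hfi ▸ le_max_right _ _
    rcases eq_or_lt_of_le hx0 with hx | hx
    · have hc : (1 - ω) * x i + (ω / A i i) * (b i - s₁ - s₂) ≤ 0 := by
        exact max_eq_right_iff.mp (hfi.symm.trans hx.symm)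
      rw [← hx] at hc ⊢
      have hc' : (ω / A i i) * (b i - s₁ - s₂) ≤ 0 := by linarith
      have hpos : 0 < ω / A i i := div_pos hω0 hd
      have : b i - s₁ - s₂ ≤ 0 := nonpos_of_mul_nonpos_right (by linarith [mul_comm (ω / A i i) (b i - s₁ - s₂)]) hpos
      refine ⟨le_refl _, ?_, by simp⟩
      rw [hsub, ← hx]
      linarith
    · have hcpos : x i = (1 - ω) * x i + (ω / A i i) * (b i - s₁ - s₂) := by
        rcases le_or_gt ((1 - ω) * x i + (ω / A i i) * (b i - s₁ - s₂)) 0 with h | h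
        · rw [max_eq_right h] at hfi; linarith
        · rw [max_eq_left h.le] at hfi; exact hfi
      have h1 : ω * x i = (ω / A i i) * (b i - s₁ - s₂) := by linarith
      have h2 : A i i * x i = b i - s₁ - s₂ := by
        have hne : ω ≠ 0 := ne_of_gt hω0
        have hAne : A i i ≠ 0 := ne_of_gt hd
        field_simp at h1
        nlinarith [h1]
      have hz : (A *ᵥ x - b) i = 0 := by rw [hsub]; linarith
      exact ⟨hx0, hz.ge, by rw [hz]; ring⟩
  refine ⟨fun i => (key i).1, fun i => (key i).2.1, ?_⟩
  unfold dotProduct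
  exact Finset.sum_eq_zero fun i _ => (key i).2.2
end

section
/- For A = [[2,−1,0.5],[−1,2,−1],[0.5,−1,2]], b = (2,−2,2), and ω = 1.9, the project-after-sweep iteration x^{k+1} = max(G_SOR x^k + c_SOR, 0) started from x⁰ = 0 satisfies x² = 0; i.e., the iteration is 2-periodic and fails to converge to the minimizer (0.8, 0, 0.8). -/
/-! With `M = D/ω + L` and `K = (1/ω - 1) D - U`, one unprojected SOR sweep maps `x` to the
solution `y` of the lower-triangular system `M y = K x + b`, so no inverse has to be computed:
it suffices to exhibit `y`. From `x⁰ = 0` the sweep gives `(19/10, -19/200, 3629/4000)`, projected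
to `x¹ = (19/10, 0, 3629/4000)`; the sweep from `x¹` is negative in every coordinate, so `x² = 0`.
A periodic orbit can only converge to its own starting point, and `0 ≠ (0.8, 0, 0.8)`. -/

open Matrix Filter

theorem Function.IsPeriodicPt.eq_of_tendsto_iterate {X : Type*} [TopologicalSpace X] [T2Space X]
    {f : X → X} {n : ℕ} {x y : X} (hx : Function.IsPeriodicPt f n x) (hn : 0 < n)
    (h : Tendsto (fun k => f^[k] x) atTop (nhds y)) : x = y := by
  have hsub : Tendsto (fun k => f^[k * n] x) atTop (nhds y) :=
    h.comp (tendsto_id.atTop_mul_const' hn)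
  refine tendsto_nhds_unique (tendsto_const_nhds.congr fun k => ?_) hsub
  exact ((hx.const_mul k).eq).symm

theorem Matrix.inv_mul_mulVec_add_inv_mulVec_eq {n α : Type*} [Fintype n] [DecidableEq n]
    [CommRing α] {M K : Matrix n n α} (hM : IsUnit M.det) {x b y : n → α}
    (h : M *ᵥ y = K *ᵥ x + b) : (M⁻¹ * K) *ᵥ x + M⁻¹ *ᵥ b = y := by
  rw [← mulVec_mulVec, ← mulVec_add, ← h, mulVec_mulVec, nonsing_inv_mul _ hM, one_mulVec]

section FinThree

variable {R : Type*} [Ring R] (A : Matrix (Fin 3) (Fin 3) R) (a : R)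

theorem smul_diagonal_add_strictLower_fin_three {L : Matrix (Fin 3) (Fin 3) R}
    (hL : L = fun i j => if j < i then A i j else 0) :
    a • diagonal (fun i => A i i) + L
      = !![a * A 0 0, 0, 0; A 1 0, a * A 1 1, 0; A 2 0, A 2 1, a * A 2 2] := by
  ext i j
  rw [Matrix.add_apply, Matrix.smul_apply, hL]
  fin_cases i <;> fin_cases j <;> simp

theorem smul_diagonal_sub_strictUpper_fin_three {U : Matrix (Fin 3) (Fin 3) R}
    (hU : U = fun i j => if i < j then A i j else 0) :
    a • diagonal (fun i => A i i) - U
      = !![a * A 0 0, -A 0 1, -A 0 2; 0, a * A 1 1, -A 1 2; 0, 0, a * A 2 2] := by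
  ext i j
  rw [Matrix.sub_apply, Matrix.smul_apply, hU]
  fin_cases i <;> fin_cases j <;> simp

end FinThree

theorem stmt_15 (A : Matrix (Fin 3) (Fin 3) ℝ)
    (hA : A = !![2, -1, 0.5; -1, 2, -1; 0.5, -1, 2])
    (b : Fin 3 → ℝ) (hb : b = ![2, -2, 2])
    (ω : ℝ) (hω : ω = 1.9)
    (D L U : Matrix (Fin 3) (Fin 3) ℝ)
    (hD : D = Matrix.diagonal fun i => A i i)
    (hL : L = fun i j => if j < i then A i j else 0)
    (hU : U = fun i j => if i < j then A i j else 0)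
    (G : Matrix (Fin 3) (Fin 3) ℝ) (c : Fin 3 → ℝ)
    (hG : G = ((1 / ω) • D + L)⁻¹ * ((1 / ω - 1) • D - U))
    (hc : c = ((1 / ω) • D + L)⁻¹ *ᵥ b)
    (F : (Fin 3 → ℝ) → (Fin 3 → ℝ))
    (hF : F = fun x => fun i => max ((G *ᵥ x + c) i) 0) :
    F^[2] (0 : Fin 3 → ℝ) = 0 ∧
    ¬ Tendsto (fun k => F^[k] (0 : Fin 3 → ℝ)) atTop (nhds ![0.8, 0, 0.8]) := by
  have hM : (1 / ω) • D + L = !![20/19, 0, 0; -1, 20/19, 0; 1/2, -1, 20/19] := by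
    rw [hD, smul_diagonal_add_strictLower_fin_three A _ hL, hA, hω]
    norm_num [cons_val_two, vecHead, vecTail]
  have hK : (1 / ω - 1) • D - U = !![-18/19, 1, -1/2; 0, -18/19, 1; 0, 0, -18/19] := by
    rw [hD, smul_diagonal_sub_strictUpper_fin_three A _ hU, hA, hω]
    norm_num [cons_val_two, vecHead, vecTail]
  have hdet : IsUnit ((1 / ω) • D + L).det := by
    rw [hM, det_fin_three]
    norm_num [cons_val_two, vecHead, vecTail]
  have sweep : ∀ x y, ((1 / ω) • D + L) *ᵥ y = ((1 / ω - 1) • D - U) *ᵥ x + b →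
      F x = fun i => max (y i) 0 := by
    intro x y h
    simp only [hF, hG, hc, inv_mul_mulVec_add_inv_mulVec_eq hdet h]
  have hx1 : F 0 = ![19/10, 0, 3629/4000] := by
    rw [sweep 0 ![19/10, -19/200, 3629/4000] (by rw [hM, hb]; ext i; fin_cases i <;> norm_num)]
    ext i; fin_cases i <;> norm_num
  have hx2 : F ![19/10, 0, 3629/4000] = 0 := by
    rw [sweep _ ![-38551/160000, -4054429/3200000, -367061/64000000]
      (by rw [hM, hK, hb]; ext i; fin_cases i <;> norm_num)]
    ext i; fin_cases i <;> norm_num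
  have hper : Function.IsPeriodicPt F 2 0 := by
    show F (F 0) = 0
    rw [hx1, hx2]
  refine ⟨hper, fun h => ?_⟩
  have := congrFun (hper.eq_of_tendsto_iterate two_pos h) 0
  norm_num at this
end

section
/- If A is symmetric positive definite and ω ∈ (0,2), then the iterates of the projected SOR method converge to the unique minimizer x* of V(x) = (1/2)xᵀAx − xᵀb over x ≥ 0, for any nonnegative initial guess. -/
/-!
Each coordinate update of projected SOR is a relaxed, projected coordinate-descent step for
`V`: since `0 < ω < 2`, updating coordinate `i` from `s` to `t` lowers `V` by at least
`a_ii (2 - ω) / (2 ω) · (t - s)²`. Hence `V` decreases along the iterates, which therefore stay in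
a compact sublevel set of `V`, and consecutive iterates become arbitrarily close. By continuity,
every cluster point is then a fixed point of the sweep, i.e. satisfies the complementarity (KKT)
conditions `x ≥ 0`, `Ax - b ≥ 0`, `xᵀ(Ax - b) = 0`; for positive definite `A` such a point is the
unique minimizer of `V` on `x ≥ 0`, so the whole sequence converges to it.
-/

open Matrix Finset Filter Topology

lemma sq_max_add_sub_le_mul {s : ℝ} (hs : 0 ≤ s) (c : ℝ) :
    (max (s + c) 0 - s) ^ 2 ≤ (max (s + c) 0 - s) * c := by
  rcases le_total (s + c) 0 with h | h
  · rw [max_eq_right h]; nlinarith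
  · rw [max_eq_left h, add_sub_cancel_left, sq]

lemma eq_max_add_iff {s c : ℝ} (hs : 0 ≤ s) : s = max (s + c) 0 ↔ c ≤ 0 ∧ s * c = 0 := by
  constructor
  · intro h
    have hc : c ≤ 0 := by linarith [le_max_left (s + c) 0]
    refine ⟨hc, ?_⟩
    rcases hs.eq_or_lt with rfl | hs
    · exact zero_mul c
    · rcases le_total (s + c) 0 with h' | h'
      · rw [max_eq_right h'] at h; linarith
      · rw [max_eq_left h'] at h; simp [show c = 0 by linarith]
  · rintro ⟨hc, hsc⟩
    rcases mul_eq_zero.mp hsc with rfl | rfl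
    · simp [hc]
    · simp [hs]

noncomputable def energy {ι : Type*} [Fintype ι] (A : Matrix ι ι ℝ) (b y : ι → ℝ) : ℝ :=
  (1 / 2) * (y ⬝ᵥ (A *ᵥ y)) - y ⬝ᵥ b

@[fun_prop]
lemma continuous_energy {ι : Type*} [Fintype ι] (A : Matrix ι ι ℝ) (b : ι → ℝ) :
    Continuous (energy A b) := by
  unfold energy; fun_prop

section Energy

variable {ι : Type*} [Fintype ι] {A : Matrix ι ι ℝ} (b : ι → ℝ)

lemma energy_add (hA : A.IsSymm) (u d : ι → ℝ) :
    energy A b (u + d) =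
      energy A b u + d ⬝ᵥ (A *ᵥ u - b) + (1 / 2) * (d ⬝ᵥ (A *ᵥ d)) := by
  have hsymm : u ⬝ᵥ (A *ᵥ d) = d ⬝ᵥ (A *ᵥ u) := by
    conv_lhs => rw [← hA.eq]
    exact dotProduct_transpose_mulVec A u d
  simp only [energy, mulVec_add, dotProduct_add, add_dotProduct, dotProduct_sub]
  linear_combination (1 / 2 : ℝ) * hsymm

lemma energy_update [DecidableEq ι] (hA : A.IsSymm) (z : ι → ℝ) (i : ι) (t : ℝ) :
    energy A b (Function.update z i t) =
      energy A b z + (t - z i) * ((A *ᵥ z) i - b i) + (1 / 2) * A i i * (t - z i) ^ 2 := by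
  have hupd : Function.update z i t = z + Pi.single i (t - z i) := by
    rw [Pi.update_eq_sub_add_single, Pi.single_sub]; abel
  rw [hupd, energy_add b hA, single_dotProduct, single_dotProduct, mulVec_single]
  simp only [Pi.smul_apply, col_apply, op_smul_eq_mul, Pi.sub_apply]
  ring

/-- The KKT conditions for minimizing `energy A b` over the nonnegative orthant. -/
def IsLCPSolution (A : Matrix ι ι ℝ) (b p : ι → ℝ) : Prop :=
  ∀ i, 0 ≤ p i ∧ 0 ≤ (A *ᵥ p - b) i ∧ p i * (A *ᵥ p - b) i = 0

lemma IsLCPSolution.energy_add_le {p : ι → ℝ} (hp : IsLCPSolution A b p) (hA : A.IsSymm)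
    {y : ι → ℝ} (hy : ∀ i, 0 ≤ y i) :
    energy A b p + (1 / 2) * ((y - p) ⬝ᵥ (A *ᵥ (y - p))) ≤ energy A b y := by
  have hgrad : 0 ≤ (y - p) ⬝ᵥ (A *ᵥ p - b) :=
    Finset.sum_nonneg fun i _ => by
      obtain ⟨-, hgi, hci⟩ := hp i
      rw [Pi.sub_apply, sub_mul, hci, sub_zero]
      exact mul_nonneg (hy i) hgi
  have h := energy_add b hA p (y - p)
  rw [add_sub_cancel] at h
  linarith

lemma IsLCPSolution.energy_le {p : ι → ℝ} (hp : IsLCPSolution A b p) (hA : A.PosSemidef)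
    {y : ι → ℝ} (hy : ∀ i, 0 ≤ y i) : energy A b p ≤ energy A b y := by
  have hq : 0 ≤ (y - p) ⬝ᵥ (A *ᵥ (y - p)) := by
    simpa using hA.dotProduct_mulVec_nonneg (y - p)
  linarith [hp.energy_add_le b (isHermitian_iff_isSymm.mp hA.1) hy]

lemma IsLCPSolution.eq_of_energy_le {p : ι → ℝ} (hp : IsLCPSolution A b p) (hA : A.PosDef)
    {y : ι → ℝ} (hy : ∀ i, 0 ≤ y i) (hle : energy A b y ≤ energy A b p) : y = p := by
  by_contra hne
  have hq : 0 < (y - p) ⬝ᵥ (A *ᵥ (y - p)) := by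
    simpa using hA.dotProduct_mulVec_pos (sub_ne_zero.mpr hne)
  linarith [hp.energy_add_le b (isHermitian_iff_isSymm.mp hA.1) hy]

lemma Matrix.PosDef.exists_pos_mul_norm_sq_le (hA : A.PosDef) :
    ∃ μ > 0, ∀ y : ι → ℝ, μ * ‖y‖ ^ 2 ≤ y ⬝ᵥ (A *ᵥ y) := by
  rcases isEmpty_or_nonempty ι with hι | hι
  · exact ⟨1, one_pos, fun y => by simp [Subsingleton.elim y 0]⟩
  obtain ⟨y₀, hy₀, hmin⟩ := (isCompact_sphere (0 : ι → ℝ) 1).exists_isMinOn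
    (NormedSpace.sphere_nonempty.mpr zero_le_one) (by fun_prop : Continuous fun y : ι → ℝ =>
      y ⬝ᵥ (A *ᵥ y)).continuousOn
  have hy₀0 : y₀ ≠ 0 := ne_zero_of_mem_unit_sphere ⟨y₀, hy₀⟩
  refine ⟨y₀ ⬝ᵥ (A *ᵥ y₀), by simpa using hA.dotProduct_mulVec_pos hy₀0, fun y => ?_⟩
  rcases eq_or_ne y 0 with rfl | hy
  · simp
  have hnorm : 0 < ‖y‖ := norm_pos_iff.mpr hy
  -- the quadratic form is homogeneous of degree two, so it suffices to compare on the sphere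
  have hle : y₀ ⬝ᵥ (A *ᵥ y₀) ≤ (‖y‖⁻¹ • y) ⬝ᵥ (A *ᵥ (‖y‖⁻¹ • y)) := hmin (by
    rw [mem_sphere_zero_iff_norm, norm_smul, norm_inv, norm_norm, inv_mul_cancel₀ hnorm.ne'])
  rw [mulVec_smul, dotProduct_smul, smul_dotProduct, smul_eq_mul, smul_eq_mul] at hle
  calc y₀ ⬝ᵥ (A *ᵥ y₀) * ‖y‖ ^ 2 ≤ ‖y‖⁻¹ * (‖y‖⁻¹ * (y ⬝ᵥ (A *ᵥ y))) * ‖y‖ ^ 2 := by gcongr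
    _ = y ⬝ᵥ (A *ᵥ y) := by field_simp

lemma abs_dotProduct_le_norm_mul (y b : ι → ℝ) : |y ⬝ᵥ b| ≤ ‖y‖ * ∑ i, |b i| := by
  rw [Finset.mul_sum]
  refine (Finset.abs_sum_le_sum_abs _ _).trans (Finset.sum_le_sum fun i _ => ?_)
  rw [abs_mul]
  gcongr
  exact norm_le_pi_norm y i

lemma isCompact_energy_sublevel (hA : A.PosDef) (c : ℝ) :
    IsCompact {y | energy A b y ≤ c} := by
  obtain ⟨μ, hμ, hμA⟩ := hA.exists_pos_mul_norm_sq_le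
  refine Metric.isCompact_of_isClosed_isBounded (isClosed_le (by fun_prop) continuous_const)
    (isBounded_iff_forall_norm_le.mpr ⟨max 1 (2 * ((∑ i, |b i|) + |c|) / μ), fun y hy => ?_⟩)
  set B := ∑ i, |b i|
  have hy : μ * ‖y‖ ^ 2 / 2 - B * ‖y‖ ≤ c := by
    have := hμA y
    have := abs_dotProduct_le_norm_mul y b
    simp only [Set.mem_ofPred_eq, energy] at hy
    nlinarith [le_abs_self (y ⬝ᵥ b)]
  rcases le_or_gt ‖y‖ 1 with h1 | h1
  · exact h1.trans (le_max_left _ _)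
  refine le_max_of_le_right ((le_div_iff₀ hμ).mpr ?_)
  nlinarith [le_abs_self c, abs_nonneg c]

lemma energy_update_max_add_le [DecidableEq ι] (hA : A.IsSymm) {i : ι} (ha : 0 < A i i)
    {ω : ℝ} (hω : ω ∈ Set.Ioo 0 2) {z : ι → ℝ} (hz : 0 ≤ z i) {t : ℝ}
    (ht : t = max (z i + ω / A i i * (b i - (A *ᵥ z) i)) 0) :
    energy A b (Function.update z i t) + A i i * (2 - ω) / (2 * ω) * (t - z i) ^ 2 ≤
      energy A b z := by
  obtain ⟨hω0, -⟩ := hω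
  -- `t` is the projection of `z i + ω / A i i * r` onto `[0, ∞)`, which contains `z i`
  have hproj : A i i / ω * (t - z i) ^ 2 ≤ (t - z i) * (b i - (A *ᵥ z) i) := by
    calc A i i / ω * (t - z i) ^ 2
        ≤ A i i / ω * ((t - z i) * (ω / A i i * (b i - (A *ᵥ z) i))) := by
          gcongr; exact ht ▸ sq_max_add_sub_le_mul hz _
      _ = (t - z i) * (b i - (A *ᵥ z) i) := by field_simp
  have hcoeff : A i i * (2 - ω) / (2 * ω) + 1 / 2 * A i i = A i i / ω := by
    field_simp; ring
  rw [energy_update b hA]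
  linear_combination hproj + (t - z i) ^ 2 * hcoeff

end Energy

lemma Finset.sum_eq_sum_filter_lt_add_add_sum_filter_gt {ι M : Type*} [Fintype ι] [LinearOrder ι]
    [LocallyFiniteOrderTop ι] [AddCommMonoid M] (f : ι → M) (i : ι) :
    ∑ j, f j = ∑ j ∈ univ.filter (· < i), f j + f i + ∑ j ∈ univ.filter (i < ·), f j := by
  rw [← sum_filter_add_sum_filter_not univ (· < i), add_assoc]
  congr 1
  simp only [not_lt, filter_le_eq_Ici, filter_lt_eq_Ioi, add_sum_Ioi_eq_sum_Ici]

section Sweep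

variable {n : ℕ}

/-- The intermediate vector of a Gauss–Seidel sweep from `u` to `v` after `m` coordinate updates. -/
def sweepState {α : Type*} (u v : Fin n → α) (m : ℕ) : Fin n → α :=
  fun j => if (j : ℕ) < m then v j else u j

section SweepState

variable {α : Type*} (u v : Fin n → α)

@[simp] lemma sweepState_zero : sweepState u v 0 = u := by
  ext j; simp [sweepState]

lemma sweepState_of_le {m : ℕ} (hm : n ≤ m) : sweepState u v m = v := by
  ext j; simp [sweepState, j.isLt.trans_le hm]

@[simp] lemma sweepState_self (m : ℕ) : sweepState u u m = u := by
  ext j; simp [sweepState]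

@[simp] lemma sweepState_apply_self (i : Fin n) : sweepState u v i i = u i := by
  simp [sweepState]

lemma sweepState_succ (i : Fin n) :
    sweepState u v (i + 1) = Function.update (sweepState u v i) i (v i) := by
  ext j
  rcases lt_trichotomy j i with h | rfl | h
  · simp [sweepState, h.ne, Fin.lt_def.mp h, Nat.lt_succ_of_lt (Fin.lt_def.mp h)]
  · simp [sweepState]
  · have hij := Fin.lt_def.mp h
    simp [sweepState, h.ne', h.not_gt, show ¬(j : ℕ) < i + 1 by omega]

end SweepState

lemma mulVec_sweepState_apply (A : Matrix (Fin n) (Fin n) ℝ) (u v : Fin n → ℝ) (i : Fin n) :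
    (A *ᵥ sweepState u v i) i = ∑ j ∈ univ.filter (· < i), A i j * v j + A i i * u i +
      ∑ j ∈ univ.filter (i < ·), A i j * u j := by
  rw [mulVec, dotProduct, sum_eq_sum_filter_lt_add_add_sum_filter_gt _ i, sweepState_apply_self]
  refine congrArg₂ (· + ·) (congrArg₂ (· + ·) ?_ rfl) ?_ <;>
    refine Finset.sum_congr rfl fun j hj => ?_
  · simp [sweepState, Fin.lt_def.mp (mem_filter.mp hj).2]
  · simp [sweepState, (Fin.lt_def.mp (mem_filter.mp hj).2).not_gt]

@[fun_prop]
lemma Continuous.sweepState {X α : Type*} [TopologicalSpace X] [TopologicalSpace α]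
    {f g : X → Fin n → α} (hf : Continuous f) (hg : Continuous g) (m : ℕ) :
    Continuous fun x => sweepState (f x) (g x) m :=
  continuous_pi fun j => .if_const _ ((continuous_apply j).comp hg) ((continuous_apply j).comp hf)

def IsProjSORSweep (A : Matrix (Fin n) (Fin n) ℝ) (b : Fin n → ℝ) (ω : ℝ) (u v : Fin n → ℝ) :
    Prop :=
  ∀ i, v i = max (u i + ω / A i i * (b i - (A *ᵥ sweepState u v i) i)) 0

section ProjSOR

variable {A : Matrix (Fin n) (Fin n) ℝ} {b : Fin n → ℝ} {ω : ℝ}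

lemma isProjSORSweep_iff (hdiag : ∀ i, A i i ≠ 0) {u v : Fin n → ℝ} :
    IsProjSORSweep A b ω u v ↔ ∀ i, v i = max ((1 - ω) * u i + (ω / A i i) *
      (b i - (∑ j ∈ univ.filter (fun j => j < i), A i j * v j) -
        (∑ j ∈ univ.filter (fun j => i < j), A i j * u j))) 0 := by
  refine forall_congr' fun i => ?_
  rw [mulVec_sweepState_apply]
  refine Eq.congr_right (congrArg (max · 0) ?_)
  field_simp [hdiag i]
  ring

lemma IsProjSORSweep.nonneg {u v : Fin n → ℝ} (h : IsProjSORSweep A b ω u v) (i : Fin n) :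
    0 ≤ v i :=
  (h i).symm ▸ le_max_right _ _

lemma isClosed_setOf_isProjSORSweep :
    IsClosed {q : (Fin n → ℝ) × (Fin n → ℝ) | IsProjSORSweep A b ω q.1 q.2} := by
  simp only [IsProjSORSweep, Set.ofPred_forall]
  exact isClosed_iInter fun i => isClosed_eq (by fun_prop) (by fun_prop)

lemma IsProjSORSweep.isLCPSolution (hdiag : ∀ i, 0 < A i i) (hω : 0 < ω) {p : Fin n → ℝ}
    (hp : ∀ i, 0 ≤ p i) (h : IsProjSORSweep A b ω p p) : IsLCPSolution A b p := by
  intro i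
  have hstep : 0 < ω / A i i := div_pos hω (hdiag i)
  obtain ⟨hres, hcompl⟩ := (eq_max_add_iff (hp i)).mp (by simpa using h i)
  rw [mul_left_comm, mul_eq_zero, or_iff_right hstep.ne'] at hcompl
  refine ⟨hp i, ?_, ?_⟩
  · rw [Pi.sub_apply, sub_nonneg]
    nlinarith
  · rw [Pi.sub_apply]
    linear_combination -hcompl

section Descent

variable {u v : Fin n → ℝ}

lemma IsProjSORSweep.energy_sweepState_succ_add_le (h : IsProjSORSweep A b ω u v) (hA : A.IsSymm)
    (hdiag : ∀ i, 0 < A i i) (hω : ω ∈ Set.Ioo 0 2) (hu : ∀ i, 0 ≤ u i) (i : Fin n) :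
    energy A b (sweepState u v (i + 1)) + A i i * (2 - ω) / (2 * ω) * (v i - u i) ^ 2 ≤
      energy A b (sweepState u v i) := by
  rw [sweepState_succ, ← sweepState_apply_self u v i]
  exact energy_update_max_add_le b hA (hdiag i) hω (by simpa using hu i) (by simpa using h i)

lemma IsProjSORSweep.antitone_energy_sweepState (h : IsProjSORSweep A b ω u v) (hA : A.IsSymm)
    (hdiag : ∀ i, 0 < A i i) (hω : ω ∈ Set.Ioo 0 2) (hu : ∀ i, 0 ≤ u i) :
    Antitone fun m => energy A b (sweepState u v m) := by
  refine antitone_nat_of_succ_le fun m => ?_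
  by_cases hm : m < n
  · have hc : 0 ≤ A ⟨m, hm⟩ ⟨m, hm⟩ * (2 - ω) / (2 * ω) :=
      div_nonneg (mul_nonneg (hdiag _).le (by linarith [hω.2])) (by linarith [hω.1])
    have := h.energy_sweepState_succ_add_le hA hdiag hω hu ⟨m, hm⟩
    nlinarith [sq_nonneg (v ⟨m, hm⟩ - u ⟨m, hm⟩)]
  · rw [sweepState_of_le u v (not_lt.mp hm), sweepState_of_le u v (by omega)]

lemma IsProjSORSweep.energy_add_le (h : IsProjSORSweep A b ω u v) (hA : A.IsSymm)
    (hdiag : ∀ i, 0 < A i i) (hω : ω ∈ Set.Ioo 0 2) (hu : ∀ i, 0 ≤ u i) (i : Fin n) :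
    energy A b v + A i i * (2 - ω) / (2 * ω) * (v i - u i) ^ 2 ≤ energy A b u := by
  have hanti := h.antitone_energy_sweepState hA hdiag hω hu
  calc energy A b v + A i i * (2 - ω) / (2 * ω) * (v i - u i) ^ 2
      = energy A b (sweepState u v n) + A i i * (2 - ω) / (2 * ω) * (v i - u i) ^ 2 := by
        rw [sweepState_of_le u v le_rfl]
    _ ≤ energy A b (sweepState u v (i + 1)) + A i i * (2 - ω) / (2 * ω) * (v i - u i) ^ 2 := by
        gcongr; exact hanti i.isLt
    _ ≤ energy A b (sweepState u v i) := h.energy_sweepState_succ_add_le hA hdiag hω hu i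
    _ ≤ energy A b (sweepState u v 0) := hanti (Nat.zero_le _)
    _ = energy A b u := by rw [sweepState_zero]

lemma IsProjSORSweep.energy_le (h : IsProjSORSweep A b ω u v) (hA : A.IsSymm)
    (hdiag : ∀ i, 0 < A i i) (hω : ω ∈ Set.Ioo 0 2) (hu : ∀ i, 0 ≤ u i) :
    energy A b v ≤ energy A b u := by
  simpa [sweepState_of_le u v le_rfl] using
    h.antitone_energy_sweepState hA hdiag hω hu (Nat.zero_le n)

end Descent

section Iterates

variable {x : ℕ → Fin n → ℝ}

lemma projSOR_iterate_nonneg (hx0 : ∀ i, 0 ≤ x 0 i)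
    (hx : ∀ k, IsProjSORSweep A b ω (x k) (x (k + 1))) : ∀ k i, 0 ≤ x k i
  | 0 => hx0
  | k + 1 => (hx k).nonneg

lemma antitone_energy_projSOR_iterate (hA : A.IsSymm) (hdiag : ∀ i, 0 < A i i)
    (hω : ω ∈ Set.Ioo 0 2) (hx0 : ∀ i, 0 ≤ x 0 i)
    (hx : ∀ k, IsProjSORSweep A b ω (x k) (x (k + 1))) :
    Antitone fun k => energy A b (x k) :=
  antitone_nat_of_succ_le fun k =>
    (hx k).energy_le hA hdiag hω (projSOR_iterate_nonneg hx0 hx k)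

lemma tendsto_projSOR_iterate_succ_sub (hA : A.PosDef) (hω : ω ∈ Set.Ioo 0 2)
    (hx0 : ∀ i, 0 ≤ x 0 i) (hx : ∀ k, IsProjSORSweep A b ω (x k) (x (k + 1))) :
    Tendsto (fun k => x (k + 1) - x k) atTop (𝓝 0) := by
  have hsymm : A.IsSymm := isHermitian_iff_isSymm.mp hA.1
  have hdiag : ∀ i, 0 < A i i := fun i => hA.diag_pos
  set L := fun k => energy A b (x k)
  have hanti : Antitone L := antitone_energy_projSOR_iterate hsymm hdiag hω hx0 hx
  have hbdd : BddBelow (Set.range L) := by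
    refine ((isCompact_energy_sublevel b hA (L 0)).bddBelow_image
      (continuous_energy A b).continuousOn).mono ?_
    rintro _ ⟨k, rfl⟩
    exact ⟨x k, hanti (Nat.zero_le k), rfl⟩
  have hL := tendsto_atTop_ciInf hanti hbdd
  have hgap : Tendsto (fun k => L k - L (k + 1)) atTop (𝓝 0) := by
    simpa using hL.sub (hL.comp (tendsto_add_atTop_nat 1))
  refine tendsto_pi_nhds.mpr fun i => ?_
  have hc : 0 < A i i * (2 - ω) / (2 * ω) :=
    div_pos (mul_pos (hdiag i) (by linarith [hω.2])) (by linarith [hω.1])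
  have hsq : ∀ k, (x (k + 1) i - x k i) ^ 2 ≤ (L k - L (k + 1)) / (A i i * (2 - ω) / (2 * ω)) :=
    fun k => (le_div_iff₀' hc).mpr <| by
      linarith [(hx k).energy_add_le hsymm hdiag hω (projSOR_iterate_nonneg hx0 hx k) i]
  refine squeeze_zero_norm (fun k => Real.abs_le_sqrt (hsq k)) ?_
  simpa using (hgap.div_const _).sqrt

lemma isLCPSolution_of_mapClusterPt_projSOR_iterate (hA : A.PosDef) (hω : ω ∈ Set.Ioo 0 2)
    (hx0 : ∀ i, 0 ≤ x 0 i) (hx : ∀ k, IsProjSORSweep A b ω (x k) (x (k + 1)))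
    {p : Fin n → ℝ} (hp : MapClusterPt p atTop x) : IsLCPSolution A b p := by
  obtain ⟨ψ, hψ, hxψ⟩ := hp.tendsto_subseq
  have hxψ_succ : Tendsto (fun m => x (ψ m + 1)) atTop (𝓝 p) := by
    simpa using hxψ.add ((tendsto_projSOR_iterate_succ_sub hA hω hx0 hx).comp hψ.tendsto_atTop)
  have hfix : IsProjSORSweep A b ω p p :=
    isClosed_setOf_isProjSORSweep.mem_of_tendsto (hxψ.prodMk_nhds hxψ_succ)
      (Eventually.of_forall fun m => hx (ψ m))
  have hp_nonneg : 0 ≤ p := isClosed_Ici.mem_of_tendsto hxψ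
    (Eventually.of_forall fun m => projSOR_iterate_nonneg hx0 hx (ψ m))
  exact hfix.isLCPSolution (fun i => hA.diag_pos) hω.1 hp_nonneg

end Iterates

end ProjSOR

end Sweep

theorem stmt_18 (n : ℕ) (A : Matrix (Fin n) (Fin n) ℝ) (hA : A.PosDef)
    (b : Fin n → ℝ)
    (ω : ℝ) (hω : ω ∈ Set.Ioo (0 : ℝ) 2)
    (V : (Fin n → ℝ) → ℝ)
    (hV : V = fun x => (1 / 2) * (x ⬝ᵥ (A *ᵥ x)) - x ⬝ᵥ b)
    (x : ℕ → Fin n → ℝ) (hx0 : ∀ j, 0 ≤ x 0 j)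
    (hsweep : ∀ k, ∀ i : Fin n,
      x (k + 1) i = max ((1 - ω) * x k i + (ω / A i i) *
        (b i - (∑ j ∈ univ.filter (fun j => j < i), A i j * x (k + 1) j) -
          (∑ j ∈ univ.filter (fun j => i < j), A i j * x k j))) 0) :
    (∃! xs : Fin n → ℝ, (∀ i, 0 ≤ xs i) ∧
      ∀ y : Fin n → ℝ, (∀ i, 0 ≤ y i) → V xs ≤ V y) ∧
    ∀ xs : Fin n → ℝ, ((∀ i, 0 ≤ xs i) ∧
        ∀ y : Fin n → ℝ, (∀ i, 0 ≤ y i) → V xs ≤ V y) →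
      Tendsto x atTop (nhds xs) := by
  obtain rfl : V = energy A b := hV
  have hx : ∀ k, IsProjSORSweep A b ω (x k) (x (k + 1)) := fun k =>
    (isProjSORSweep_iff fun i => hA.diag_pos.ne').mpr (hsweep k)
  have hsymm : A.IsSymm := isHermitian_iff_isSymm.mp hA.1
  set K := {y | energy A b y ≤ energy A b (x 0)}
  have hK : IsCompact K := isCompact_energy_sublevel b hA _
  have hxK : ∀ᶠ k in atTop, x k ∈ K := Eventually.of_forall fun k =>
    antitone_energy_projSOR_iterate hsymm (fun i => hA.diag_pos) hω hx0 hx (Nat.zero_le k)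
  have hlcp : ∀ p, MapClusterPt p atTop x → IsLCPSolution A b p := fun p =>
    isLCPSolution_of_mapClusterPt_projSOR_iterate hA hω hx0 hx
  have heq : ∀ xs p, ((∀ i, 0 ≤ xs i) ∧ ∀ y, (∀ i, 0 ≤ y i) → energy A b xs ≤ energy A b y) →
      IsLCPSolution A b p → xs = p := fun xs p hxs hp =>
    hp.eq_of_energy_le b hA hxs.1 (hxs.2 p fun i => (hp i).1)
  obtain ⟨p, -, hp⟩ := hK.exists_mapClusterPt_of_frequently hxK.frequently
  refine ⟨⟨p, ⟨fun i => (hlcp p hp i).1, fun y hy => (hlcp p hp).energy_le b hA.posSemidef hy⟩,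
    fun xs hxs => heq xs p hxs (hlcp p hp)⟩, fun xs hxs => ?_⟩
  exact hK.tendsto_nhds_of_unique_mapClusterPt hxK fun q _ hq => (heq xs q hxs (hlcp q hq)).symm
end
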